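/- arXiv:1512.07701 — 4 statements merged into one kernel-verified Lean document; each statement's English description precedes it below -/
import Mathlib

section
/- If a ∉ ℤ, then the Witt algebra module 𝒜_{a,b} is irreducible, i.e., it has no nonzero proper submodule. -/
/-!
`d₀` acts diagonally on the basis `vᵢ` with the pairwise distinct eigenvalues `a + i`, so applying
a Lagrange interpolation polynomial in `d₀` to a nonzero vector of a submodule isolates one basis
vector `vᵢ` in it. From `vᵢ` one reaches any `vⱼ` in two steps `d_{j-i-m} d_m vᵢ`: the two
coefficients are affine in `m`, and neither vanishes identically because `a ∉ ℤ`, so each vanishes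
for at most one `m`.
-/

/-- The action of the Witt-algebra generator `d_m` on the module
`𝒜_{a,b} = ⊕_{i∈ℤ} ℂ vᵢ` (encoded as `ℤ →₀ ℂ`, with `vᵢ = single i 1`):
`d_m · vᵢ = (a + i + b m) v_{m+i}`, extended linearly. -/
noncomputable def dAct (a b : ℂ) (m : ℤ) (v : ℤ →₀ ℂ) : ℤ →₀ ℂ :=
  v.sum fun i c => Finsupp.single (m + i) ((a + (i : ℂ) + b * (m : ℂ)) * c)

open Polynomial Finsupp

section Diagonal

variable {ι K : Type*} [Field K] {eigenvalue : ι → K} {D : (ι →₀ K) → ι →₀ K}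
  {p : Submodule K (ι →₀ K)}

theorem Submodule.exists_eval_mul_mem_of_diagonal (hD : ∀ v i, D v i = eigenvalue i * v i)
    (hp : ∀ v ∈ p, D v ∈ p) (P : K[X]) {v : ι →₀ K} (hv : v ∈ p) :
    ∃ w ∈ p, ∀ i, w i = P.eval (eigenvalue i) * v i := by
  induction P using Polynomial.induction_on with
  | C c => exact ⟨c • v, p.smul_mem c hv, fun i => by simp⟩
  | add P Q hP hQ =>
    obtain ⟨w₁, hw₁, h₁⟩ := hP
    obtain ⟨w₂, hw₂, h₂⟩ := hQ
    exact ⟨w₁ + w₂, p.add_mem hw₁ hw₂, fun i => by simp [h₁, h₂, add_mul]⟩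
  | monomial n c h =>
    obtain ⟨w, hw, hwv⟩ := h
    exact ⟨D w, hp w hw, fun i => by simp only [hD, hwv, eval_mul, eval_C, eval_pow, eval_X]; ring⟩

theorem Submodule.single_mem_of_diagonal (hinj : Function.Injective eigenvalue)
    (hD : ∀ v i, D v i = eigenvalue i * v i) (hp : ∀ v ∈ p, D v ∈ p) {v : ι →₀ K} (hv : v ∈ p)
    (i : ι) : single i (v i) ∈ p := by
  classical
  obtain ⟨w, hw, hwv⟩ :=
    exists_eval_mul_mem_of_diagonal hD hp (Lagrange.basis (insert i v.support) eigenvalue i) hv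
  convert hw using 1
  ext k
  rw [hwv, single_apply]
  split_ifs with hik
  · subst hik
    rw [Lagrange.eval_basis_self hinj.injOn (Finset.mem_insert_self _ _), one_mul]
  · by_cases hk : k ∈ v.support
    · rw [Lagrange.eval_basis_of_ne hik (Finset.mem_insert_of_mem hk), zero_mul]
    · rw [notMem_support_iff.mp hk, mul_zero]

end Diagonal

theorem setOf_add_mul_intCast_eq_zero_subsingleton {R : Type*} [CommRing R] [IsDomain R]
    [CharZero R] {α β : R} (h : α ≠ 0 ∨ β ≠ 0) :
    {m : ℤ | α + β * m = 0}.Subsingleton := by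
  intro m hm n hn
  have hβ : β * (m - n) = 0 := by linear_combination hm.out - hn.out
  rcases mul_eq_zero.mp hβ with hβ | hmn
  · have hα : α = 0 := by simpa [hβ] using hm.out
    simp [hα, hβ] at h
  · exact_mod_cast sub_eq_zero.mp hmn

section Witt

variable {a b : ℂ}

theorem dAct_single (m i : ℤ) (c : ℂ) :
    dAct a b m (single i c) = single (m + i) ((a + i + b * m) * c) := by
  simp [dAct]

theorem dAct_zero_apply (v : ℤ →₀ ℂ) (j : ℤ) : dAct a b 0 v j = (a + j) * v j := by
  classical
  simp only [dAct, Finsupp.sum_apply, single_apply, zero_add, Int.cast_zero, mul_zero, add_zero]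
  rw [Finsupp.sum, Finset.sum_ite_eq' v.support j fun i => (a + (i : ℂ)) * v i]
  split_ifs with hj
  · rfl
  · rw [notMem_support_iff.mp hj, mul_zero]

variable {U : Submodule ℂ (ℤ →₀ ℂ)} (hU : ∀ m : ℤ, ∀ v ∈ U, dAct a b m v ∈ U)
include hU

theorem single_add_mem_of_single_mem {i m : ℤ} (hc : a + i + b * m ≠ 0)
    (hi : single i (1 : ℂ) ∈ U) : single (m + i) (1 : ℂ) ∈ U := by
  have h := hU m _ hi
  rwa [dAct_single, mul_one, ← smul_single_one, U.smul_mem_iff hc] at h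

theorem single_mem_of_single_mem (ha : ∀ n : ℤ, a ≠ n) {i : ℤ} (hi : single i (1 : ℂ) ∈ U)
    (j : ℤ) : single j (1 : ℂ) ∈ U := by
  have h₁ : {m : ℤ | a + i + b * m = 0}.Subsingleton :=
    setOf_add_mul_intCast_eq_zero_subsingleton
      (Or.inl fun h => ha (-i) (by push_cast; linear_combination h))
  have h₂ : {m : ℤ | a + i + b * (j - i) + (1 - b) * m = 0}.Subsingleton := by
    refine setOf_add_mul_intCast_eq_zero_subsingleton (or_iff_not_imp_right.mpr fun hb => ?_)
    obtain rfl : b = 1 := by linear_combination -not_not.mp hb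
    exact fun h => ha (-j) (by push_cast; linear_combination h)
  obtain ⟨m, hm⟩ := (h₁.finite.union h₂.finite).exists_notMem
  simp only [Set.mem_union, Set.mem_ofPred_eq, not_or] at hm
  have hmi := single_add_mem_of_single_mem hU hm.1 hi
  have hj := single_add_mem_of_single_mem hU (m := j - i - m)
    (fun h => hm.2 (by push_cast at h; linear_combination h)) hmi
  rwa [show j - i - m + (m + i) = j by ring] at hj

end Witt

/-- if `a ∉ ℤ`, then the Witt module `𝒜_{a,b}` is irreducible: every subspace
invariant under all the operators `d_m` is `⊥` or `⊤`. -/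
theorem Aab_irreducible_of_not_int (a b : ℂ) (ha : ∀ n : ℤ, a ≠ (n : ℂ)) :
    ∀ U : Submodule ℂ (ℤ →₀ ℂ),
      (∀ m : ℤ, ∀ v ∈ U, dAct a b m v ∈ U) → U = ⊥ ∨ U = ⊤ := by
  intro U hU
  refine or_iff_not_imp_left.mpr fun hbot => ?_
  obtain ⟨v, hv, hv0⟩ := U.exists_mem_ne_zero_of_ne_bot hbot
  obtain ⟨i, hi⟩ : ∃ i, v i ≠ 0 := not_forall.mp fun h => hv0 (Finsupp.ext h)
  have hvi : single i (v i) ∈ U :=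
    U.single_mem_of_diagonal ((add_right_injective a).comp Int.cast_injective)
      dAct_zero_apply (hU 0) hv i
  rw [← smul_single_one, U.smul_mem_iff hi] at hvi
  have hall := single_mem_of_single_mem hU ha hvi
  rw [eq_top_iff, ← (Finsupp.basisSingleOne : Module.Basis ℤ ℂ (ℤ →₀ ℂ)).span_eq, Submodule.span_le]
  rintro _ ⟨j, rfl⟩
  simpa using hall j
end

section
/- For a,b,c ∈ ℂ, the formulas d_m v_i = (a + i + bm)v_{m+i} and Y_n v_i = c v_{n+i} define a module structure on ⊕_{i∈ℤ}ℂv_i over the Lie algebra 𝒟 with relations [d_m,d_n]=(n-m)d_{m+n}, [d_m,Y_n]=nY_{m+n}, [Y_m,Y_n]=0. -/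
/-- The action of the generator `Y_n` of the twisted Heisenberg–Virasoro algebra `𝒟`
on `𝒜_{a,b,c}`: `Y_n · vᵢ = c v_{n+i}`, extended linearly. -/
noncomputable def yAct (c : ℂ) (n : ℤ) (v : ℤ →₀ ℂ) : ℤ →₀ ℂ :=
  v.sum fun i co => Finsupp.single (n + i) (c * co)

/-! Both `d_m` and `Y_n` act as weighted shifts `vᵢ ↦ w(i) v_{k+i}`. The commutator of the
shifts by `m` and `n` with weights `w`, `w'` is the shift by `m + n` with weight
`w(n+i) w'(i) - w'(m+i) w(i)`, so each relation of `𝒟` reduces to a polynomial identity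
between weights. -/

open Finsupp

section WeightedShift

variable {G R : Type*}

noncomputable def weightedShift [Add G] [CommSemiring R] (k : G) (w : G → R) :
    Module.End R (G →₀ R) :=
  lsum R fun i => w i • lsingle (k + i)

lemma weightedShift_apply [Add G] [CommSemiring R] (k : G) (w : G → R) (v : G →₀ R) :
    weightedShift k w v = v.sum fun i x => single (k + i) (w i * x) := by
  simp only [weightedShift, lsum_apply]
  congr 1
  ext i x : 2
  simp only [LinearMap.smul_apply, lsingle_apply, smul_single, smul_eq_mul]

@[simp]
lemma weightedShift_single [Add G] [CommSemiring R] (k i : G) (w : G → R) (x : R) :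
    weightedShift k w (single i x) = single (k + i) (w i * x) := by
  rw [weightedShift_apply, sum_single_index (by rw [mul_zero, single_zero])]

lemma weightedShift_mul [AddSemigroup G] [CommSemiring R] (m n : G) (w w' : G → R) :
    weightedShift m w * weightedShift n w' =
      weightedShift (m + n) fun i => w (n + i) * w' i :=
  lhom_ext fun i x => by
    simp only [Module.End.mul_apply, weightedShift_single, add_assoc, mul_assoc]

lemma lie_weightedShift [AddCommSemigroup G] [CommRing R] (m n : G) (w w' : G → R) :
    ⁅weightedShift m w, weightedShift n w'⁆ =
      weightedShift (m + n) fun i => w (n + i) * w' i - w' (m + i) * w i :=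
  lhom_ext fun i x => by
    simp only [Ring.lie_def, weightedShift_mul, add_comm n m, LinearMap.sub_apply,
      weightedShift_single, sub_mul, single_sub]

lemma smul_weightedShift [Add G] [CommSemiring R] (r : R) (k : G) (w : G → R) :
    r • weightedShift k w = weightedShift k (r • w) :=
  lhom_ext fun i x => by
    simp only [LinearMap.smul_apply, weightedShift_single, smul_single, Pi.smul_apply,
      smul_eq_mul, mul_assoc]

end WeightedShift

noncomputable def dOp (a b : ℂ) (m : ℤ) : Module.End ℂ (ℤ →₀ ℂ) :=
  weightedShift m fun i => a + i + b * m

noncomputable def yOp (c : ℂ) (n : ℤ) : Module.End ℂ (ℤ →₀ ℂ) :=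
  weightedShift n fun _ => c

lemma coe_dOp (a b : ℂ) (m : ℤ) : ⇑(dOp a b m) = dAct a b m :=
  funext fun v => weightedShift_apply _ _ v

lemma coe_yOp (c : ℂ) (n : ℤ) : ⇑(yOp c n) = yAct c n :=
  funext fun v => weightedShift_apply _ _ v

lemma lie_dOp_dOp (a b : ℂ) (m n : ℤ) :
    ⁅dOp a b m, dOp a b n⁆ = ((n : ℂ) - m) • dOp a b (m + n) := by
  rw [dOp, dOp, dOp, lie_weightedShift, smul_weightedShift]
  congr 1
  funext i
  push_cast
  simp only [Pi.smul_apply, smul_eq_mul]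
  ring

lemma lie_dOp_yOp (a b c : ℂ) (m n : ℤ) :
    ⁅dOp a b m, yOp c n⁆ = (n : ℂ) • yOp c (m + n) := by
  rw [dOp, yOp, yOp, lie_weightedShift, smul_weightedShift]
  congr 1
  funext i
  push_cast
  simp only [Pi.smul_apply, smul_eq_mul]
  ring

lemma yOp_commute (c : ℂ) (m n : ℤ) : Commute (yOp c m) (yOp c n) := by
  simp only [Commute, SemiconjBy, yOp, weightedShift_mul, add_comm m n]

/-- the formulas `d_m vᵢ = (a + i + bm) v_{m+i}` and `Y_n vᵢ = c v_{n+i}`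
define a `𝒟`-module structure on `⊕_{i∈ℤ} ℂvᵢ`: the operators satisfy the relations
`[d_m, d_n] = (n-m) d_{m+n}`, `[d_m, Y_n] = n Y_{m+n}`, `[Y_m, Y_n] = 0`. -/
theorem Aabc_D_module (a b c : ℂ) :
    (∀ (m n : ℤ) (v : ℤ →₀ ℂ),
      dAct a b m (dAct a b n v) - dAct a b n (dAct a b m v)
        = ((n : ℂ) - (m : ℂ)) • dAct a b (m + n) v) ∧
    (∀ (m n : ℤ) (v : ℤ →₀ ℂ),
      dAct a b m (yAct c n v) - yAct c n (dAct a b m v) = (n : ℂ) • yAct c (m + n) v) ∧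
    (∀ (m n : ℤ) (v : ℤ →₀ ℂ), yAct c m (yAct c n v) = yAct c n (yAct c m v)) := by
  refine ⟨fun m n v => ?_, fun m n v => ?_, fun m n v => ?_⟩
  · simpa [Ring.lie_def, coe_dOp] using LinearMap.congr_fun (lie_dOp_dOp a b m n) v
  · simpa [Ring.lie_def, coe_dOp, coe_yOp] using LinearMap.congr_fun (lie_dOp_yOp a b c m n) v
  · simpa [coe_yOp] using LinearMap.congr_fun (yOp_commute c m n).eq v
end

section
/- Let M be a finite-dimensional sl₂-module and a, b ∈ ℂ. Then the formulas d_m(u ⊗ t^i) = (a + bm + i) u ⊗ t^{m+i}, x_m(u ⊗ t^i) = (x·u) ⊗ t^{m+i} for x ∈ {e,f,h}, and C = 0, define a module structure over the affine-Virasoro algebra 𝓛 of type A_1 on M ⊗ ℂ[t,t⁻¹]. -/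
/-- Basis index set for the affine-Virasoro algebra of type A₁:
`E i, F i, H i, D i` for `i ∈ ℤ`, and a central element `C`. -/
inductive AVB : Type
  | E : ℤ → AVB
  | F : ℤ → AVB
  | H : ℤ → AVB
  | D : ℤ → AVB
  | C : AVB

/-- The underlying vector space of the affine-Virasoro algebra of type A₁. -/
abbrev AV : Type := AVB →₀ ℂ

/-- The basis vector corresponding to a basis index. -/
noncomputable def sgl (b : AVB) : AV := Finsupp.single b 1

open AVB in
/-- The bracket on basis elements. -/
noncomputable def avbBr : AVB → AVB → AV
  | E i, F j => sgl (H (i+j)) + (if i + j = 0 then (i:ℂ) • sgl C else 0)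
  | F j, E i => -(sgl (H (i+j)) + (if i + j = 0 then (i:ℂ) • sgl C else 0))
  | H i, E j => (2:ℂ) • sgl (E (i+j))
  | E j, H i => -((2:ℂ) • sgl (E (i+j)))
  | H i, F j => -((2:ℂ) • sgl (F (i+j)))
  | F j, H i => (2:ℂ) • sgl (F (i+j))
  | H i, H j => if i + j = 0 then ((2*i : ℤ) : ℂ) • sgl C else 0
  | D i, D j => ((j:ℂ) - (i:ℂ)) • sgl (D (i+j))
      + (if i + j = 0 then ((((j:ℂ))^3 - (j:ℂ))/12) • sgl C else 0)
  | D i, E j => (j:ℂ) • sgl (E (i+j))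
  | E j, D i => -((j:ℂ) • sgl (E (i+j)))
  | D i, F j => (j:ℂ) • sgl (F (i+j))
  | F j, D i => -((j:ℂ) • sgl (F (i+j)))
  | D i, H j => (j:ℂ) • sgl (H (i+j))
  | H j, D i => -((j:ℂ) • sgl (H (i+j)))
  | E _, E _ => 0
  | F _, F _ => 0
  | C, _ => 0
  | _, C => 0

/-- The bilinear extension of the bracket to the whole space. -/
noncomputable def avBr (x y : AV) : AV :=
  x.sum fun a ca => y.sum fun b cb => (ca * cb) • avbBr a b

variable {M : Type*} [AddCommGroup M] [Module ℂ M]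

/-- The action of the basis elements of the affine-Virasoro algebra `𝓛` of type A₁ on
`L(M) = M ⊗ ℂ[t,t⁻¹]` (encoded as `ℤ →₀ M`, with `u ⊗ tⁱ = single i u`):
`d_m (u⊗tⁱ) = (a + bm + i) u⊗t^{m+i}`, `x_m (u⊗tⁱ) = (x·u)⊗t^{m+i}` for `x ∈ {e,f,h}`,
and `C = 0`; here the `sl₂`-module structure on `M` is given by endomorphisms `E F H`. -/
noncomputable def lAct (a b : ℂ) (E F H : Module.End ℂ M) :
    AVB → (ℤ →₀ M) → (ℤ →₀ M)
  | AVB.D m, v => v.sum fun i u => Finsupp.single (m + i) ((a + b * (m : ℂ) + (i : ℂ)) • u)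
  | AVB.E m, v => v.sum fun i u => Finsupp.single (m + i) (E u)
  | AVB.F m, v => v.sum fun i u => Finsupp.single (m + i) (F u)
  | AVB.H m, v => v.sum fun i u => Finsupp.single (m + i) (H u)
  | AVB.C, _ => 0

/-- The linear extension of `lAct` to the whole of `𝓛`. -/
noncomputable def lExt (a b : ℂ) (E F H : Module.End ℂ M) (x : AV) (w : ℤ →₀ M) :
    ℤ →₀ M :=
  x.sum fun bIdx c => c • lAct a b E F H bIdx w

/-!
Each basis operator of `𝓛` sends `u ⊗ tʲ` to `(φ u) ⊗ t^{m+j}`, where `m` is the degree of the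
basis element and `φ` is `e`, `f`, `h`, multiplication by `a + bm + j`, or `0` (for `C`). Hence on
a pure tensor both sides of the bracket identity are pure tensors of the same degree, and
comparing coefficients reduces each case to an `sl₂` relation, to
`(a + bn + j + m) - (a + bn + j) = m`, or (for the `d`-`d` bracket) to a polynomial identity;
the central terms act by `0`.
-/

lemma Module.End.apply_apply_eq_of_sub_eq {R N : Type*} [Ring R] [AddCommGroup N]
    [Module R N] {X Y Z : Module.End R N} (h : X * Y - Y * X = Z) (v : N) :
    X (Y v) = Y (X v) + Z v := by
  rw [← h, LinearMap.sub_apply, Module.End.mul_apply, Module.End.mul_apply, add_sub_cancel]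

namespace AVB

def deg : AVB → ℤ
  | E m | F m | H m | D m => m
  | C => 0

end AVB

section LoopModule

variable (a b : ℂ) (E F H : Module.End ℂ M)

noncomputable def lActCoeff : AVB → ℤ → Module.End ℂ M
  | .E _, _ => E
  | .F _, _ => F
  | .H _, _ => H
  | .D m, i => (a + b * m + i) • 1
  | .C, _ => 0

lemma lAct_eq_lsum (x : AVB) :
    lAct a b E F H x =
      Finsupp.lsum ℂ fun i => Finsupp.lsingle (x.deg + i) ∘ₗ lActCoeff a b E F H x i := by
  ext v
  cases x <;> simp [lAct, lActCoeff, AVB.deg, Finsupp.lsum_apply]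

lemma isLinearMap_lAct (x : AVB) : IsLinearMap ℂ (lAct a b E F H x) := by
  rw [lAct_eq_lsum]
  exact LinearMap.isLinear _

lemma lAct_single (x : AVB) (j : ℤ) (u : M) :
    lAct a b E F H x (Finsupp.single j u) =
      Finsupp.single (x.deg + j) (lActCoeff a b E F H x j u) := by
  simp [lAct_eq_lsum]

lemma lAct_commutator_single (x y : AVB) (j : ℤ) (u : M) :
    lAct a b E F H x (lAct a b E F H y (Finsupp.single j u))
        - lAct a b E F H y (lAct a b E F H x (Finsupp.single j u)) =
      Finsupp.single (x.deg + y.deg + j)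
        (lActCoeff a b E F H x (y.deg + j) (lActCoeff a b E F H y j u)
          - lActCoeff a b E F H y (x.deg + j) (lActCoeff a b E F H x j u)) := by
  simp only [lAct_single, Finsupp.single_sub, add_assoc, add_left_comm x.deg]

lemma lExt_eq_linearCombination (z : AV) (w : ℤ →₀ M) :
    lExt a b E F H z w = Finsupp.linearCombination ℂ (fun x => lAct a b E F H x w) z :=
  (Finsupp.linearCombination_apply ℂ z).symm

lemma lExt_sgl (x : AVB) (w : ℤ →₀ M) : lExt a b E F H (sgl x) w = lAct a b E F H x w := by
  simp [lExt_eq_linearCombination, sgl]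

lemma lExt_add_left (z z' : AV) (w : ℤ →₀ M) :
    lExt a b E F H (z + z') w = lExt a b E F H z w + lExt a b E F H z' w := by
  simp only [lExt_eq_linearCombination, map_add]

lemma lExt_smul_left (c : ℂ) (z : AV) (w : ℤ →₀ M) :
    lExt a b E F H (c • z) w = c • lExt a b E F H z w := by
  simp only [lExt_eq_linearCombination, map_smul]

lemma lExt_neg_left (z : AV) (w : ℤ →₀ M) :
    lExt a b E F H (-z) w = -lExt a b E F H z w := by
  simp only [lExt_eq_linearCombination, map_neg]

lemma lExt_zero_left (w : ℤ →₀ M) : lExt a b E F H 0 w = 0 := by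
  simp only [lExt_eq_linearCombination, map_zero]

lemma lExt_ite_smul_sgl_C (p : Prop) [Decidable p] (c : ℂ) (w : ℤ →₀ M) :
    lExt a b E F H (if p then c • sgl AVB.C else 0) w = 0 := by
  split_ifs
  · rw [lExt_smul_left, lExt_sgl]
    exact smul_zero c
  · exact lExt_zero_left a b E F H w

lemma lExt_add_right (z : AV) (v w : ℤ →₀ M) :
    lExt a b E F H z (v + w) = lExt a b E F H z v + lExt a b E F H z w := by
  simp only [lExt, (isLinearMap_lAct a b E F H _).map_add, smul_add, Finsupp.sum_add]

lemma lExt_zero_right (z : AV) : lExt a b E F H z 0 = 0 := by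
  simp only [lExt, (isLinearMap_lAct a b E F H _).map_zero, smul_zero, Finsupp.sum,
    Finset.sum_const_zero]

end LoopModule

lemma lExt_avbBr_single {E F H : Module.End ℂ M}
    (hHE : H * E - E * H = (2 : ℂ) • E) (hHF : H * F - F * H = -((2 : ℂ) • F))
    (hEF : E * F - F * E = H) (a b : ℂ) (x y : AVB) (j : ℤ) (u : M) :
    lExt a b E F H (avbBr x y) (Finsupp.single j u) =
      lAct a b E F H x (lAct a b E F H y (Finsupp.single j u))
        - lAct a b E F H y (lAct a b E F H x (Finsupp.single j u)) := by
  rw [lAct_commutator_single]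
  -- `avbBr` writes the reversed pairs (e.g. `F j, E i`) with swapped index sums: `Int.add_comm`.
  rcases x with m|m|m|m|_ <;> rcases y with n|n|n|n|_ <;>
    simp only [avbBr, lExt_add_left, lExt_smul_left, lExt_neg_left, lExt_zero_left, lExt_sgl,
      lExt_ite_smul_sgl_C, add_zero, lAct_single, AVB.deg, lActCoeff, Finsupp.smul_single,
      Int.add_comm, ← Finsupp.single_neg, (Finsupp.single_injective _).eq_iff,
      LinearMap.smul_apply, Module.End.one_apply, LinearMap.zero_apply, map_smul, map_zero,
      smul_zero, sub_self, Finsupp.single_zero, Int.cast_add,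
      Module.End.apply_apply_eq_of_sub_eq hEF, Module.End.apply_apply_eq_of_sub_eq hHE,
      Module.End.apply_apply_eq_of_sub_eq hHF, LinearMap.neg_apply]
  all_goals module

theorem LM_is_module_general (M : Type*) [AddCommGroup M] [Module ℂ M]
    (E F H : Module.End ℂ M)
    (hHE : H * E - E * H = (2 : ℂ) • E)
    (hHF : H * F - F * H = -((2 : ℂ) • F))
    (hEF : E * F - F * E = H)
    (a b : ℂ) :
    (∀ x : AVB, IsLinearMap ℂ (lAct a b E F H x)) ∧
    (∀ x y : AVB, ∀ w : ℤ →₀ M,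
      lExt a b E F H (avbBr x y) w
        = lAct a b E F H x (lAct a b E F H y w) - lAct a b E F H y (lAct a b E F H x w)) := by
  refine ⟨isLinearMap_lAct a b E F H, fun x y w => ?_⟩
  have hx := isLinearMap_lAct a b E F H x
  have hy := isLinearMap_lAct a b E F H y
  induction w using Finsupp.induction_linear with
  | zero => simp only [lExt_zero_right, hx.map_zero, hy.map_zero, sub_zero]
  | add v w hv hw =>
    rw [lExt_add_right, hv, hw, hx.map_add, hy.map_add, hx.map_add, hy.map_add]
    abel
  | single j u => exact lExt_avbBr_single hHE hHF hEF a b x y j u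

/-- for a finite-dimensional `sl₂`-module `M` and `a, b ∈ ℂ`, the formulas
`d_m(u⊗tⁱ) = (a+bm+i) u⊗t^{m+i}`, `x_m(u⊗tⁱ) = (x·u)⊗t^{m+i}` (`x ∈ {e,f,h}`), `C = 0`
define an `𝓛`-module structure on `M ⊗ ℂ[t,t⁻¹]`: each operator is linear and the
operators represent the bracket of `𝓛`. -/
theorem LM_is_module (M : Type*) [AddCommGroup M] [Module ℂ M] [FiniteDimensional ℂ M]
    (E F H : Module.End ℂ M)
    (hHE : H * E - E * H = (2 : ℂ) • E)
    (hHF : H * F - F * H = -((2 : ℂ) • F))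
    (hEF : E * F - F * E = H)
    (a b : ℂ) :
    (∀ x : AVB, IsLinearMap ℂ (lAct a b E F H x)) ∧
    (∀ x y : AVB, ∀ w : ℤ →₀ M,
      lExt a b E F H (avbBr x y) w
        = lAct a b E F H x (lAct a b E F H y w) - lAct a b E F H y (lAct a b E F H x w)) :=
  LM_is_module_general M E F H hHE hHF hEF a b
end

section
/- If M is a nontrivial finite-dimensional irreducible sl₂-module, then the 𝓛-module L(M) = M ⊗ ℂ[t,t⁻¹] with action d_m(u⊗t^i) = (a+bm+i)u⊗t^{m+i}, x_m(u⊗t^i) = (x·u)⊗t^{m+i}, C=0 is irreducible for any a, b ∈ ℂ. -/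
variable {M : Type*} [AddCommGroup M] [Module ℂ M]

/-!
The zero mode `d₀` acts on `M ⊗ tⁱ` by the scalar `a + i`, and these scalars are pairwise
distinct, so every submodule `U` of `L(M)` is spanned by its homogeneous pieces
`Uᵢ = {u | u ⊗ tⁱ ∈ U}`. Since `x_m` maps `Uᵢ` into `U_{m+i}` by `u ↦ x·u`, each `Uᵢ` is an
`sl₂`-submodule of `M`. If `U ≠ 0`, some `Uᵢ` is nonzero, hence all of `M`; then every `Uⱼ`
contains `e·M + f·M + h·M`, which is nonzero because `sl₂` cannot act trivially on an
irreducible module of dimension at least two. So every `Uⱼ = M` and `U = L(M)`.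
-/

namespace Submodule

variable {K ι V : Type*} [Field K] [AddCommGroup V] [Module K V]

theorem single_apply_mem_of_diagonal (U : Submodule K (ι →₀ V)) {c : ι → K}
    (hc : Function.Injective c) {T : (ι →₀ V) → (ι →₀ V)} (hT : ∀ w k, T w k = c k • w k)
    (hTU : ∀ w ∈ U, T w ∈ U) {w : ι →₀ V} (hw : w ∈ U) (i : ι) :
    Finsupp.single i (w i) ∈ U := by
  classical
  induction hn : w.support.card using Nat.strong_induction_on generalizing w with
  | _ n ih =>
  by_cases hsub : w.support ⊆ {i}
  · rwa [← Finsupp.support_subset_singleton.mp hsub]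
  obtain ⟨j, hj, hji⟩ := Finset.not_subset.mp hsub
  rw [Finset.mem_singleton] at hji
  set w' := T w - c j • w
  have hw'U : w' ∈ U := U.sub_mem (hTU w hw) (U.smul_mem _ hw)
  have hw' : ∀ k, w' k = (c k - c j) • w k := fun k => by
    simp only [w', Finsupp.sub_apply, Finsupp.smul_apply, hT, sub_smul]
  have hsupp : w'.support ⊆ w.support.erase j := fun k hk => by
    rw [Finsupp.mem_support_iff, hw'] at hk
    refine Finset.mem_erase.mpr ⟨fun hkj => hk (by rw [hkj, sub_self, zero_smul]), ?_⟩
    exact Finsupp.mem_support_iff.mpr fun h0 => hk (by rw [h0, smul_zero])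
  have hcard : w'.support.card < n :=
    hn ▸ (Finset.card_le_card hsupp).trans_lt (Finset.card_erase_lt_of_mem hj)
  have hci : c i - c j ≠ 0 := sub_ne_zero.mpr (hc.ne (Ne.symm hji))
  have := U.smul_mem (c i - c j)⁻¹ (ih _ hcard hw'U rfl)
  rwa [hw', Finsupp.smul_single, smul_smul, inv_mul_cancel₀ hci, one_smul] at this

theorem exists_comap_lsingle_ne_bot {U : Submodule K (ι →₀ V)} (hU : U ≠ ⊥)
    (hsingle : ∀ w ∈ U, ∀ i, Finsupp.single i (w i) ∈ U) :
    ∃ i, U.comap (Finsupp.lsingle i) ≠ ⊥ := by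
  obtain ⟨w, hwU, hw⟩ := U.exists_mem_ne_zero_of_ne_bot hU
  obtain ⟨i, hi⟩ : ∃ i, w i ≠ 0 := by simpa [Finsupp.ext_iff] using hw
  exact ⟨i, (Submodule.ne_bot_iff _).mpr ⟨w i, hsingle w hwU i, hi⟩⟩

theorem eq_top_of_forall_comap_lsingle_eq_top {U : Submodule K (ι →₀ V)}
    (hU : ∀ i, U.comap (Finsupp.lsingle i) = ⊤) : U = ⊤ :=
  eq_top_iff.mpr <| Finsupp.iSup_lsingle_range.symm.le.trans <|
    iSup_le fun i => LinearMap.range_le_iff_comap.mpr (hU i)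

end Submodule

theorem exists_apply_ne_zero_of_irreducible {K V : Type*} [Field K] [AddCommGroup V]
    [Module K V] {E F H : Module.End K V}
    (hirr : ∀ W : Submodule K V,
      (∀ u ∈ W, E u ∈ W ∧ F u ∈ W ∧ H u ∈ W) → W = ⊥ ∨ W = ⊤)
    (hdim : 2 ≤ Module.finrank K V) :
    ∃ u, E u ≠ 0 ∨ F u ≠ 0 ∨ H u ≠ 0 := by
  by_contra! h
  -- If `sl₂` acts trivially, every line is a submodule.
  have : Nontrivial V := Module.nontrivial_of_finrank_pos (R := K) (by omega)
  obtain ⟨u, hu⟩ := exists_ne (0 : V)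
  rcases hirr (K ∙ u) (fun v _ => by simp [h]) with hbot | htop
  · exact hu ((Submodule.mem_bot K).mp (hbot ▸ Submodule.mem_span_singleton_self u))
  · have := finrank_span_singleton (K := K) hu
    rw [htop, finrank_top] at this
    omega

section LAction

variable (a b : ℂ) (E F H : Module.End ℂ M)

theorem lAct_D_zero_apply (w : ℤ →₀ M) (k : ℤ) :
    lAct a b E F H (AVB.D 0) w k = (a + k) • w k := by
  simp +contextual [lAct, Finsupp.sum_apply, Finsupp.single_apply]

@[simp]
theorem lAct_E_single (m i : ℤ) (u : M) :
    lAct a b E F H (AVB.E m) (Finsupp.single i u) = Finsupp.single (m + i) (E u) := by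
  simp [lAct]

@[simp]
theorem lAct_F_single (m i : ℤ) (u : M) :
    lAct a b E F H (AVB.F m) (Finsupp.single i u) = Finsupp.single (m + i) (F u) := by
  simp [lAct]

@[simp]
theorem lAct_H_single (m i : ℤ) (u : M) :
    lAct a b E F H (AVB.H m) (Finsupp.single i u) = Finsupp.single (m + i) (H u) := by
  simp [lAct]

variable {a b E F H} in
theorem mem_comap_lsingle_of_lAct_invariant {U : Submodule ℂ (ℤ →₀ M)}
    (hU : ∀ x : AVB, ∀ w ∈ U, lAct a b E F H x w ∈ U) {i : ℤ} {u : M}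
    (hu : u ∈ U.comap (Finsupp.lsingle i)) (j : ℤ) :
    E u ∈ U.comap (Finsupp.lsingle j) ∧ F u ∈ U.comap (Finsupp.lsingle j) ∧
      H u ∈ U.comap (Finsupp.lsingle j) := by
  simp only [Submodule.mem_comap, Finsupp.lsingle_apply] at hu ⊢
  refine ⟨?_, ?_, ?_⟩
  · simpa using hU (AVB.E (j - i)) _ hu
  · simpa using hU (AVB.F (j - i)) _ hu
  · simpa using hU (AVB.H (j - i)) _ hu

end LAction

theorem LM_irreducible_general (M : Type*) [AddCommGroup M] [Module ℂ M]
    (E F H : Module.End ℂ M)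
    (hirr : ∀ W : Submodule ℂ M,
      (∀ u ∈ W, E u ∈ W ∧ F u ∈ W ∧ H u ∈ W) → W = ⊥ ∨ W = ⊤)
    (hnontriv : 2 ≤ Module.finrank ℂ M)
    (a b : ℂ) :
    ∀ U : Submodule ℂ (ℤ →₀ M),
      (∀ x : AVB, ∀ w ∈ U, lAct a b E F H x w ∈ U) → U = ⊥ ∨ U = ⊤ := by
  intro U hU
  refine or_iff_not_imp_left.mpr fun hbot => ?_
  have hslice (j : ℤ) : U.comap (Finsupp.lsingle j) ≠ ⊥ → U.comap (Finsupp.lsingle j) = ⊤ :=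
    (hirr _ fun _ hu => mem_comap_lsingle_of_lAct_invariant hU hu j).resolve_left
  have hsingle (w : ℤ →₀ M) (hw : w ∈ U) (i : ℤ) : Finsupp.single i (w i) ∈ U :=
    U.single_apply_mem_of_diagonal ((add_right_injective a).comp Int.cast_injective)
      (lAct_D_zero_apply a b E F H) (hU (AVB.D 0)) hw i
  obtain ⟨i₀, hi₀⟩ := Submodule.exists_comap_lsingle_ne_bot hbot hsingle
  have htop₀ := hslice i₀ hi₀
  refine Submodule.eq_top_of_forall_comap_lsingle_eq_top fun j => hslice j ?_
  obtain ⟨u, hu⟩ := exists_apply_ne_zero_of_irreducible hirr hnontriv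
  obtain ⟨hE, hF, hH⟩ :=
    mem_comap_lsingle_of_lAct_invariant hU (htop₀ ▸ Submodule.mem_top : u ∈ _) j
  rw [Submodule.ne_bot_iff]
  rcases hu with hu | hu | hu
  exacts [⟨_, hE, hu⟩, ⟨_, hF, hu⟩, ⟨_, hH, hu⟩]

/-- if `M` is a nontrivial (dimension ≥ 2) finite-dimensional irreducible
`sl₂`-module, then the `𝓛`-module `L(M) = M ⊗ ℂ[t,t⁻¹]` is irreducible for any `a, b ∈ ℂ`. -/
theorem LM_irreducible (M : Type*) [AddCommGroup M] [Module ℂ M] [FiniteDimensional ℂ M]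
    (E F H : Module.End ℂ M)
    (hHE : H * E - E * H = (2 : ℂ) • E)
    (hHF : H * F - F * H = -((2 : ℂ) • F))
    (hEF : E * F - F * E = H)
    (hirr : ∀ W : Submodule ℂ M,
      (∀ u ∈ W, E u ∈ W ∧ F u ∈ W ∧ H u ∈ W) → W = ⊥ ∨ W = ⊤)
    (hnontriv : 2 ≤ Module.finrank ℂ M)
    (a b : ℂ) :
    ∀ U : Submodule ℂ (ℤ →₀ M),
      (∀ x : AVB, ∀ w ∈ U, lAct a b E F H x w ∈ U) → U = ⊥ ∨ U = ⊤ :=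
  LM_irreducible_general M E F H hirr hnontriv a b
end
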